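/- Let X and Y be Banach spaces and let u be an extreme point of the closed unit ball of X⊗̂_πY. If u ∈ NA_π(X⊗̂_πY), then u is an elementary tensor, i.e. u = x₀⊗y₀ for some x₀ ∈ B_X and y₀ ∈ B_Y. -/
import Mathlib


open MeasureTheory Metric Set Filter TopologicalSpace

noncomputable section

variable {𝕜 : Type*} [RCLike 𝕜]
variable {X : Type*} [NormedAddCommGroup X] [NormedSpace 𝕜 X]
variable {Y : Type*} [NormedAddCommGroup Y] [NormedSpace 𝕜 Y]
variable {T : Type*} [NormedAddCommGroup T] [NormedSpace 𝕜 T]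
variable [NormedSpace ℝ T] [IsScalarTower ℝ 𝕜 T]

/-- `T`, together with the continuous bilinear map `tmul`, is a realization of the
projective tensor product `X ⊗̂_π Y`: it is complete, the span of elementary tensors
`x ⊗ y = tmul x y` is dense, and on that span the norm is the projective norm. -/
structure IsProjTensor (tmul : X →L[𝕜] Y →L[𝕜] T) : Prop where
  complete : CompleteSpace T
  dense_span :
    Dense ((Submodule.span 𝕜 (Set.range fun p : X × Y => tmul p.1 p.2) : Submodule 𝕜 T) : Set T)
  norm_eq : ∀ z : T,
    z ∈ Submodule.span 𝕜 (Set.range fun p : X × Y => tmul p.1 p.2) →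
    ‖z‖ = sInf { c : ℝ | ∃ (m : ℕ) (x : Fin m → X) (y : Fin m → Y),
      z = ∑ i, tmul (x i) (y i) ∧ c = ∑ i, ‖x i‖ * ‖y i‖ }

/-- `u` attains its projective norm (`u ∈ NA_π(X ⊗̂_π Y)`): it admits a representation
`u = ∑ λ_n x_n ⊗ y_n` with `x_n ∈ B_X`, `y_n ∈ B_Y`, `λ_n ≥ 0` and `∑ λ_n = ‖u‖_π`. -/
def NApi (tmul : X →L[𝕜] Y →L[𝕜] T) (u : T) : Prop :=
  ∃ (x : ℕ → X) (y : ℕ → Y) (l : ℕ → ℝ),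
    (∀ n, ‖x n‖ ≤ 1) ∧ (∀ n, ‖y n‖ ≤ 1) ∧ (∀ n, 0 ≤ l n) ∧
    HasSum (fun n => (l n : 𝕜) • tmul (x n) (y n)) u ∧ HasSum l ‖u‖

/-- `u` is finitely norm-attaining (`u ∈ FNA_π(X ⊗̂_π Y)`): it admits a finite optimal
representation `u = ∑_{k<m} x_k ⊗ y_k` with `∑_{k<m} ‖x_k‖‖y_k‖ = ‖u‖_π`. -/
def FNApi (tmul : X →L[𝕜] Y →L[𝕜] T) (u : T) : Prop :=
  ∃ (m : ℕ) (x : Fin m → X) (y : Fin m → Y),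
    u = ∑ i, tmul (x i) (y i) ∧ ∑ i, ‖x i‖ * ‖y i‖ = ‖u‖

/-- `u` is an integral projective norm-attaining tensor witnessed by `μ`: `μ` is a finite
positive Borel measure concentrated on `B_X × B_Y`, the map `(x, y) ↦ x ⊗ y` is
`μ`-Bochner integrable, `u = ∫ x ⊗ y ∂μ` and `‖μ‖ = ‖u‖_π`. -/
def INApiWitness [MeasurableSpace X] [MeasurableSpace Y]
    (tmul : X →L[𝕜] Y →L[𝕜] T) (u : T) (μ : Measure (X × Y)) : Prop :=
  IsFiniteMeasure μ ∧
  μ ((closedBall (0 : X) 1 ×ˢ closedBall (0 : Y) 1)ᶜ) = 0 ∧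
  Integrable (fun p : X × Y => tmul p.1 p.2) μ ∧
  u = ∫ p, tmul p.1 p.2 ∂μ ∧
  (μ Set.univ).toReal = ‖u‖

/-- `u ∈ INA_π(X ⊗̂_π Y)`: `u` is an integral projective norm-attaining tensor. -/
def INApi [MeasurableSpace X] [MeasurableSpace Y]
    (tmul : X →L[𝕜] Y →L[𝕜] T) (u : T) : Prop :=
  ∃ μ : Measure (X × Y), INApiWitness tmul u μ


lemma norm_tmul_le (tmul : X →L[𝕜] Y →L[𝕜] T) (hT : IsProjTensor tmul) (x : X) (y : Y) :
    ‖tmul x y‖ ≤ ‖x‖ * ‖y‖ := by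
  rw [hT.norm_eq (tmul x y) (Submodule.subset_span ⟨(x, y), rfl⟩)]
  apply csInf_le
  · refine ⟨0, fun c hc => ?_⟩
    obtain ⟨m, xs, ys, -, rfl⟩ := hc
    positivity
  · exact ⟨1, fun _ => x, fun _ => y, by simp, by simp⟩

/-- Corollary 2.14: an extreme point of the unit ball which attains its projective norm
is an elementary tensor. -/
theorem stmt_9 [CompleteSpace X] [CompleteSpace Y]
    (tmul : X →L[𝕜] Y →L[𝕜] T) (hT : IsProjTensor tmul)
    (u : T) (hu : u ∈ Set.extremePoints ℝ (closedBall (0 : T) 1))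
    (hna : NApi tmul u) :
    ∃ (x : X) (y : Y), ‖x‖ ≤ 1 ∧ ‖y‖ ≤ 1 ∧ u = tmul x y := by
  obtain ⟨x, y, l, hx, hy, hl, hsum, hlsum⟩ := hna
  rw [mem_extremePoints] at hu
  have hu1 : ‖u‖ ≤ 1 := mem_closedBall_zero_iff.mp hu.1
  by_cases hu0 : u = 0
  · exact ⟨0, 0, by simp, by simp, by simp [hu0]⟩
  have hupos : 0 < ‖u‖ := norm_pos_iff.mpr hu0
  -- find an index with positive weight
  have hk : ∃ k, 0 < l k := by
    by_contra h
    push_neg at h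
    have : ∀ n, l n = 0 := fun n => le_antisymm (h n) (hl n)
    have : HasSum l 0 := by
      rw [show l = fun _ => (0:ℝ) from funext this]; exact hasSum_zero
    exact absurd (this.unique hlsum) (ne_of_lt hupos)
  obtain ⟨k, hk⟩ := hk
  set g : ℕ → T := fun n => (l n : 𝕜) • tmul (x n) (y n) with hg
  have hnormv : ∀ n, ‖tmul (x n) (y n)‖ ≤ 1 := fun n =>
    (norm_tmul_le tmul hT (x n) (y n)).trans
      (mul_le_one₀ (hx n) (norm_nonneg _) (hy n))
  have hgnorm : ∀ n, ‖g n‖ ≤ l n := fun n => by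
    rw [hg]
    calc ‖(l n : 𝕜) • tmul (x n) (y n)‖ = ‖(l n : 𝕜)‖ * ‖tmul (x n) (y n)‖ := norm_smul _ _
    _ ≤ |l n| * 1 := by
        apply mul_le_mul _ (hnormv n) (norm_nonneg _) (abs_nonneg _)
        simp [RCLike.norm_ofReal]
    _ = l n := by rw [mul_one, abs_of_nonneg (hl n)]
  have hlk : l k ≤ ‖u‖ := le_hasSum hlsum k (fun j _ => hl j)
  -- the "rest" sums
  set l' : ℕ → ℝ := fun n => if n = k then 0 else l n with hl'
  have hl'sum : HasSum l' (‖u‖ - l k) := by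
    have := hlsum.sub (hasSum_ite_eq k (l k))
    refine this.congr_fun fun n => ?_
    by_cases h : n = k <;> simp [hl', h]
  set h : ℕ → T := fun n => if n = k then 0 else g n with hh
  have hhsum : HasSum h (u - g k) := by
    have := hsum.sub (hasSum_ite_eq k (g k))
    refine this.congr_fun fun n => ?_
    by_cases hn : n = k <;> simp [hh, hn, hg]
  have hhnorm : ∀ n, ‖h n‖ ≤ l' n := fun n => by
    by_cases hn : n = k <;> simp [hh, hl', hn, hgnorm n]
  have hrest : ‖u - g k‖ ≤ ‖u‖ - l k := by
    have hsummable : Summable fun n => ‖h n‖ :=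
      Summable.of_nonneg_of_le (fun n => norm_nonneg _) hhnorm hl'sum.summable
    calc ‖u - g k‖ = ‖∑' n, h n‖ := by rw [hhsum.tsum_eq]
    _ ≤ ∑' n, ‖h n‖ := norm_tsum_le_tsum_norm hsummable
    _ ≤ ∑' n, l' n := Summable.tsum_le_tsum hhnorm hsummable hl'sum.summable
    _ = ‖u‖ - l k := hl'sum.tsum_eq
  rcases lt_or_ge (l k) 1 with hlt | hge
  · -- convex combination argument
    have h1k : 0 < 1 - l k := by linarith
    set w : T := (1 - l k)⁻¹ • (u - g k) with hw
    have hwball : w ∈ closedBall (0 : T) 1 := by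
      rw [mem_closedBall_zero_iff, hw, norm_smul, norm_inv, Real.norm_of_nonneg h1k.le]
      rw [inv_mul_le_iff₀ h1k, mul_one]
      exact hrest.trans (by linarith)
    have hvball : tmul (x k) (y k) ∈ closedBall (0 : T) 1 :=
      mem_closedBall_zero_iff.mpr (hnormv k)
    have hseg : u ∈ openSegment ℝ (tmul (x k) (y k)) w := by
      refine ⟨l k, 1 - l k, hk, h1k, by ring, ?_⟩
      rw [hw, smul_inv_smul₀ (ne_of_gt h1k)]
      rw [RCLike.real_smul_eq_coe_smul (K := 𝕜)]
      simp [hg]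
    obtain ⟨heq, -⟩ := hu.2 _ hvball _ hwball hseg
    exact ⟨x k, y k, hx k, hy k, heq.symm⟩
  · -- l k = 1 case: all other weights vanish
    have hlk1 : l k = 1 := le_antisymm (hlk.trans hu1) hge
    have hrest0 : ‖u‖ - l k = 0 := by
      have : 0 ≤ ‖u‖ - l k := by
        have := le_hasSum hl'sum k (fun j _ => by
          by_cases hj : j = k <;> simp [hl', hj, hl j])
        simpa [hl'] using this
      have h2 : ‖u‖ - l k ≤ 0 := by rw [hlk1]; linarith
      linarith
    have : ‖u - g k‖ ≤ 0 := hrest.trans (le_of_eq hrest0)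
    have hug : u = g k := by
      have := le_antisymm this (norm_nonneg _)
      rwa [norm_eq_zero, sub_eq_zero] at this
    refine ⟨x k, y k, hx k, hy k, ?_⟩
    rw [hug, hg]
    simp [hlk1]
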